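/- arXiv:2506.17688 — 4 statements merged into one kernel-verified Lean document; each statement's English description precedes it below -/
import Mathlib

section
/- Let Ω ⊆ ℝ² be a bounded open set, ν ∈ ℝ with ν ≠ 0, let u = (u₁,u₂) : ℝ² → ℝ² be three times continuously differentiable on Ω with its divergence w = ∂u₁/∂x + ∂u₂/∂y extending continuously to the closure of Ω, let p : ℝ² → ℝ be twice continuously differentiable on Ω, and let f = (f₁,f₂) be continuously differentiable on Ω. Suppose that on Ω the momentum equation −νΔuᵢ + ∂p/∂x_i = fᵢ holds for i = 1,2 and the pressure Poisson equation Δp = ∂f₁/∂x + ∂f₂/∂y holds, and that w = 0 on the boundary ∂Ω. Then w = 0 throughout Ω; that is, u is divergence-free in Ω. -/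
open Filter Topology Set


/-- Partial derivative in the `j`-th coordinate direction of a scalar field on `ℝ²`. -/
noncomputable def pd (j : Fin 2) (f : ℝ × ℝ → ℝ) : ℝ × ℝ → ℝ :=
  fun p => fderiv ℝ f p (if j = 0 then ((1 : ℝ), (0 : ℝ)) else ((0 : ℝ), (1 : ℝ)))

/-- Laplacian `Δg = ∂²g/∂x² + ∂²g/∂y²` of a scalar field on `ℝ²`. -/
noncomputable def lap (f : ℝ × ℝ → ℝ) : ℝ × ℝ → ℝ :=
  fun p => pd 0 (pd 0 f) p + pd 1 (pd 1 f) p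

def ev (j : Fin 2) : ℝ × ℝ := if j = 0 then ((1 : ℝ), (0 : ℝ)) else ((0 : ℝ), (1 : ℝ))

lemma pd_eq (j : Fin 2) (f : ℝ × ℝ → ℝ) (p : ℝ × ℝ) : pd j f p = fderiv ℝ f p (ev j) := rfl

lemma pd_congr {f g : ℝ × ℝ → ℝ} {p : ℝ × ℝ} (h : f =ᶠ[𝓝 p] g) (j : Fin 2) :
    pd j f p = pd j g p := by
  simp only [pd_eq, h.fderiv_eq]

lemma contDiffAt_pd {n m : ℕ} {f : ℝ × ℝ → ℝ} {p : ℝ × ℝ} (j : Fin 2)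
    (h : ContDiffAt ℝ n f p) (hmn : m + 1 ≤ n) : ContDiffAt ℝ m (pd j f) p := by
  have h1 : ContDiffAt ℝ m (fderiv ℝ f) p := h.fderiv_right (by exact_mod_cast hmn)
  exact (ContinuousLinearMap.apply ℝ ℝ (ev j)).contDiff.contDiffAt.comp p h1

lemma diffAt_pd {n : ℕ} {f : ℝ × ℝ → ℝ} {p : ℝ × ℝ} (j : Fin 2)
    (h : ContDiffAt ℝ n f p) (hn : 2 ≤ n) : DifferentiableAt ℝ (pd j f) p :=
  (contDiffAt_pd (m := 1) j h hn).differentiableAt (by norm_num)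

lemma pd_add {f g : ℝ × ℝ → ℝ} {p : ℝ × ℝ} (hf : DifferentiableAt ℝ f p)
    (hg : DifferentiableAt ℝ g p) (j : Fin 2) :
    pd j (fun q => f q + g q) p = pd j f p + pd j g p := by
  simp only [pd_eq, fderiv_fun_add hf hg]; rfl

lemma pd_sub {f g : ℝ × ℝ → ℝ} {p : ℝ × ℝ} (hf : DifferentiableAt ℝ f p)
    (hg : DifferentiableAt ℝ g p) (j : Fin 2) :
    pd j (fun q => f q - g q) p = pd j f p - pd j g p := by
  simp only [pd_eq, fderiv_fun_sub hf hg]; rfl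

lemma pd_neg (f : ℝ × ℝ → ℝ) (p : ℝ × ℝ) (j : Fin 2) :
    pd j (fun q => -f q) p = -pd j f p := by
  simp only [pd_eq, fderiv_fun_neg]; rfl

lemma pd_const_mul {f : ℝ × ℝ → ℝ} {p : ℝ × ℝ} (hf : DifferentiableAt ℝ f p) (c : ℝ) (j : Fin 2) :
    pd j (fun q => c * f q) p = c * pd j f p := by
  simp only [pd_eq, fderiv_const_mul hf]; rfl

lemma pd_mul_const {f : ℝ × ℝ → ℝ} {p : ℝ × ℝ} (hf : DifferentiableAt ℝ f p) (c : ℝ) (j : Fin 2) :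
    pd j (fun q => f q * c) p = pd j f p * c := by
  simp only [pd_eq, fderiv_mul_const hf]
  simp [mul_comm]

lemma hasFDerivAt_expfst (p : ℝ × ℝ) :
    HasFDerivAt (fun q : ℝ × ℝ => Real.exp q.1)
      (Real.exp p.1 • ContinuousLinearMap.fst ℝ ℝ ℝ) p :=
  (Real.hasDerivAt_exp p.1).comp_hasFDerivAt p hasFDerivAt_fst

lemma contDiff_expfst : ContDiff ℝ ⊤ (fun q : ℝ × ℝ => Real.exp q.1) :=
  Real.contDiff_exp.comp contDiff_fst

lemma pd_expfst (j : Fin 2) (p : ℝ × ℝ) :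
    pd j (fun q : ℝ × ℝ => Real.exp q.1) p = if j = 0 then Real.exp p.1 else 0 := by
  rw [pd_eq, (hasFDerivAt_expfst p).fderiv]
  fin_cases j <;> simp [ev]

lemma pd_swap {g : ℝ × ℝ → ℝ} {q : ℝ × ℝ} (h : ContDiffAt ℝ 2 g q) (i j : Fin 2) :
    pd i (pd j g) q = pd j (pd i g) q := by
  have hd : DifferentiableAt ℝ (fderiv ℝ g) q :=
    (h.fderiv_right (m := 1) (by norm_num)).differentiableAt one_ne_zero
  have key : ∀ a b : Fin 2, pd a (pd b g) q = fderiv ℝ (fderiv ℝ g) q (ev a) (ev b) := by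
    intro a b
    have h2 : HasFDerivAt (fun p => fderiv ℝ g p (ev b))
        ((ContinuousLinearMap.apply ℝ ℝ (ev b)).comp (fderiv ℝ (fderiv ℝ g) q)) q :=
      (ContinuousLinearMap.apply ℝ ℝ (ev b)).hasFDerivAt.comp q hd.hasFDerivAt
    rw [pd_eq]
    have h3 : fderiv ℝ (pd b g) q = (ContinuousLinearMap.apply ℝ ℝ (ev b)).comp
        (fderiv ℝ (fderiv ℝ g) q) := h2.fderiv
    rw [h3]; rfl
  rw [key, key]
  exact h.isSymmSndFDerivAt (by norm_num) (ev i) (ev j)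

lemma deriv2_nonpos_of_isLocalMax {h : ℝ → ℝ} (hmax : IsLocalMax h 0)
    (hcd : ContDiffAt ℝ 2 h 0) (hd2 : DifferentiableAt ℝ (deriv h) 0) :
    deriv (deriv h) 0 ≤ 0 := by
  by_contra hc
  push_neg at hc
  have h1 : deriv h 0 = 0 := hmax.deriv_eq_zero
  have hder : HasDerivAt (deriv h) (deriv (deriv h) 0) 0 := hd2.hasDerivAt
  have hslope := hasDerivAt_iff_tendsto_slope.1 hder
  have h2 : ∀ᶠ t in 𝓝[≠] (0:ℝ), 0 < slope (deriv h) 0 t :=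
    hslope.eventually (eventually_gt_nhds hc)
  have hpos : ∀ᶠ t in 𝓝[>] (0:ℝ), 0 < deriv h t := by
    have h3 : ∀ᶠ t in 𝓝[>] (0:ℝ), 0 < slope (deriv h) 0 t :=
      h2.filter_mono (nhdsWithin_mono 0 (fun x hx => ne_of_gt hx))
    filter_upwards [h3, self_mem_nhdsWithin] with t ht ht0
    rw [slope_def_field, h1, sub_zero, sub_zero] at ht
    rcases div_pos_iff.1 ht with ⟨ha, _⟩ | ⟨_, hb⟩
    · exact ha
    · exact absurd ht0 (not_lt.2 hb.le)
  have hdiff : ∀ᶠ t in 𝓝 (0:ℝ), DifferentiableAt ℝ h t := by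
    filter_upwards [hcd.eventually (by norm_num)] with t ht
    exact ht.differentiableAt (by norm_num)
  obtain ⟨δ1, hδ1, hball⟩ := Metric.eventually_nhds_iff.1 (hdiff.and hmax)
  obtain ⟨v, hv0, hIoo⟩ := (mem_nhdsGT_iff_exists_Ioo_subset).1 hpos
  set δ := min (δ1 / 2) (v / 2) with hδ
  have hv0' : (0:ℝ) < v := mem_Ioi.1 hv0
  have hδpos : 0 < δ := lt_min (by linarith) (by linarith)
  have hsub : Icc (0:ℝ) δ ⊆ Metric.ball 0 δ1 := by
    intro t ht
    rw [Metric.mem_ball, Real.dist_eq, sub_zero, abs_of_nonneg ht.1]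
    calc t ≤ δ := ht.2
      _ ≤ δ1 / 2 := min_le_left _ _
      _ < δ1 := by linarith
  have hcont : ContinuousOn h (Icc 0 δ) := fun t ht =>
    ((hball (hsub ht)).1.continuousAt).continuousWithinAt
  have hmono : StrictMonoOn h (Icc 0 δ) := by
    apply strictMonoOn_of_deriv_pos (convex_Icc 0 δ) hcont
    intro t ht
    rw [interior_Icc] at ht
    apply hIoo
    exact ⟨ht.1, lt_of_lt_of_le ht.2 (le_trans (min_le_right _ _) (by linarith))⟩
  have hlt : h 0 < h δ := hmono ⟨le_refl 0, hδpos.le⟩ ⟨hδpos.le, le_refl δ⟩ hδpos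
  have hle : h δ ≤ h 0 := (hball (hsub ⟨hδpos.le, le_refl δ⟩)).2
  linarith

lemma pd2_nonpos_of_isLocalMax {g : ℝ × ℝ → ℝ} {z : ℝ × ℝ} (hg : ContDiffAt ℝ 2 g z)
    (hmax : IsLocalMax g z) (j : Fin 2) : pd j (pd j g) z ≤ 0 := by
  set e := ev j with he
  set L : ℝ → ℝ × ℝ := fun t => z + t • e with hLdef
  have hL0 : L 0 = z := by simp [hLdef]
  have hLd : ∀ t : ℝ, HasDerivAt L e t := by
    intro t
    have h1 : HasDerivAt (fun s : ℝ => s • e) ((1:ℝ) • e) t := (hasDerivAt_id t).smul_const e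
    simpa only [one_smul] using h1.const_add z
  have hLcont : Continuous L := by fun_prop
  have hLsm : ContDiff ℝ 2 L := by
    apply ContDiff.add contDiff_const
    exact contDiff_id.smul contDiff_const
  have hT : Tendsto L (𝓝 0) (𝓝 z) := by
    rw [← hL0]; exact hLcont.continuousAt
  set h : ℝ → ℝ := fun t => g (L t) with hhdef
  have hmaxh : IsLocalMax h 0 := by
    have h1 := hT.eventually hmax
    show ∀ᶠ t in 𝓝 (0:ℝ), h t ≤ h 0
    simpa only [hhdef, hL0] using h1
  have hcdh : ContDiffAt ℝ 2 h 0 := ContDiffAt.comp 0 (by rw [hL0]; exact hg) hLsm.contDiffAt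
  -- first derivative of h near 0
  have hev : ∀ᶠ t in 𝓝 (0:ℝ), deriv h t = pd j g (L t) := by
    filter_upwards [hT.eventually (hg.eventually (by norm_num))] with t ht
    have hgd : DifferentiableAt ℝ g (L t) := ht.differentiableAt (by norm_num)
    have : HasDerivAt h (fderiv ℝ g (L t) e) t := hgd.hasFDerivAt.comp_hasDerivAt t (hLd t)
    rw [this.deriv, pd_eq]
  -- second derivative at 0
  have hpdg : DifferentiableAt ℝ (pd j g) z := diffAt_pd (n := 2) j hg le_rfl
  have h2 : HasDerivAt (fun t => pd j g (L t)) (fderiv ℝ (pd j g) z e) 0 := by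
    have hp0 : HasFDerivAt (pd j g) (fderiv ℝ (pd j g) z) (L 0) := by
      rw [hL0]; exact hpdg.hasFDerivAt
    exact hp0.comp_hasDerivAt 0 (hLd 0)
  have hdd : deriv (deriv h) 0 = pd j (pd j g) z := by
    rw [Filter.EventuallyEq.deriv_eq hev, h2.deriv, pd_eq]
  have hd2 : DifferentiableAt ℝ (deriv h) 0 := by
    have : DifferentiableAt ℝ (fun t => pd j g (L t)) 0 := h2.differentiableAt
    exact this.congr_of_eventuallyEq hev
  rw [← hdd]
  exact deriv2_nonpos_of_isLocalMax hmaxh hcdh hd2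

lemma le_zero_of_subharmonic {Ω : Set (ℝ × ℝ)} (hΩ : IsOpen Ω) (hΩb : Bornology.IsBounded Ω)
    {W : ℝ × ℝ → ℝ} (hWc : ContinuousOn W (closure Ω))
    (hW2 : ∀ q ∈ Ω, ContDiffAt ℝ 2 W q)
    (hlap : ∀ q ∈ Ω, lap W q = 0)
    (hbd : ∀ q ∈ frontier Ω, W q ≤ 0) :
    ∀ q ∈ Ω, W q ≤ 0 := by
  intro q hq
  have hK : IsCompact (closure Ω) := hΩb.isCompact_closure
  have hKne : (closure Ω).Nonempty := ⟨q, subset_closure hq⟩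
  have hEc : Continuous (fun p : ℝ × ℝ => Real.exp p.1) := contDiff_expfst.continuous
  obtain ⟨zM, _, hzMmax⟩ := hK.exists_isMaxOn hKne hEc.continuousOn
  set C := Real.exp zM.1 with hC
  have hCpos : 0 < C := Real.exp_pos _
  have claim : ∀ ε : ℝ, 0 < ε → W q ≤ ε * C := by
    intro ε hε
    set g : ℝ × ℝ → ℝ := fun p => W p + ε * Real.exp p.1 with hgdef
    have hgc : ContinuousOn g (closure Ω) :=
      hWc.add ((continuous_const.mul hEc).continuousOn)
    obtain ⟨z, hzK, hzmax⟩ := hK.exists_isMaxOn hKne hgc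
    by_cases hz : z ∈ Ω
    · exfalso
      have hloc : IsLocalMax g z :=
        hzmax.isLocalMax (mem_of_superset (hΩ.mem_nhds hz) subset_closure)
      have hg2 : ContDiffAt ℝ 2 g z :=
        (hW2 z hz).add ((contDiff_const.mul contDiff_expfst).contDiffAt.of_le le_top)
      -- compute pd j g on Ω
      have hpdg : ∀ j : Fin 2, ∀ p ∈ Ω,
          pd j g p = pd j W p + ε * (if j = 0 then Real.exp p.1 else 0) := by
        intro j p hp
        have hWd : DifferentiableAt ℝ W p := (hW2 p hp).differentiableAt (by norm_num)
        have hEd : DifferentiableAt ℝ (fun p : ℝ × ℝ => ε * Real.exp p.1) p :=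
          (contDiff_const.mul contDiff_expfst).differentiable (by simp) |>.differentiableAt
        rw [hgdef]
        rw [pd_add hWd hEd j]
        congr 1
        rw [pd_const_mul ((contDiff_expfst.differentiable (by simp)).differentiableAt) ε j,
          pd_expfst]
      have hlapg : lap g z = ε * Real.exp z.1 := by
        have hsplit0 : pd 0 (pd 0 g) z = pd 0 (pd 0 W) z + ε * Real.exp z.1 := by
          have heq0 : pd 0 g =ᶠ[𝓝 z] fun p => pd 0 W p + ε * Real.exp p.1 := by
            filter_upwards [hΩ.mem_nhds hz] with p hp
            simpa using hpdg 0 p hp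
          have hWdd : DifferentiableAt ℝ (pd 0 W) z := diffAt_pd (n := 2) 0 (hW2 z hz) le_rfl
          have hEd : DifferentiableAt ℝ (fun p : ℝ × ℝ => ε * Real.exp p.1) z :=
            ((contDiff_const.mul contDiff_expfst).differentiable (by simp)).differentiableAt
          rw [pd_congr heq0 0, pd_add hWdd hEd 0,
            pd_const_mul ((contDiff_expfst.differentiable (by simp)).differentiableAt) ε 0,
            pd_expfst]
          simp
        have hsplit1 : pd 1 (pd 1 g) z = pd 1 (pd 1 W) z := by
          have heq1 : pd 1 g =ᶠ[𝓝 z] pd 1 W := by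
            filter_upwards [hΩ.mem_nhds hz] with p hp
            simpa using hpdg 1 p hp
          rw [pd_congr heq1 1]
        show pd 0 (pd 0 g) z + pd 1 (pd 1 g) z = ε * Real.exp z.1
        rw [hsplit0, hsplit1]
        have h00 : pd 0 (pd 0 W) z + pd 1 (pd 1 W) z = 0 := hlap z hz
        linarith
      have hle : lap g z ≤ 0 := by
        have h0 := pd2_nonpos_of_isLocalMax hg2 hloc 0
        have h1 := pd2_nonpos_of_isLocalMax hg2 hloc 1
        show pd 0 (pd 0 g) z + pd 1 (pd 1 g) z ≤ 0
        linarith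
      rw [hlapg] at hle
      nlinarith [Real.exp_pos z.1]
    · have hzf : z ∈ frontier Ω := by
        rw [frontier, hΩ.interior_eq]
        exact ⟨hzK, hz⟩
      have hWz : W z ≤ 0 := hbd z hzf
      have hgq : g q ≤ g z := hzmax (subset_closure hq)
      have hez : Real.exp z.1 ≤ C := hzMmax hzK
      have heq' : 0 < Real.exp q.1 := Real.exp_pos _
      have : W q + ε * Real.exp q.1 ≤ W z + ε * Real.exp z.1 := hgq
      nlinarith
  by_contra hW
  push_neg at hW
  have := claim (W q / (2 * C)) (by positivity)
  have heq2 : W q / (2 * C) * C = W q / 2 := by field_simp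
  rw [heq2] at this
  linarith

/-- Let `Ω ⊆ ℝ²` be a bounded open set and `ν ≠ 0`. Let `u` be `C³` on `Ω`, with divergence
`w = ∂u₁/∂x + ∂u₂/∂y` extending continuously to `closure Ω` (by a function `W`), let `P` be `C²`
and `f` be `C¹` on `Ω`. If on `Ω` the momentum equation `−νΔuᵢ + ∂P/∂x_i = fᵢ` and the pressure
Poisson equation `ΔP = div f` hold, and `W = 0` on the boundary `∂Ω`, then `w = 0` throughout
`Ω`, i.e. `u` is divergence-free in `Ω`. -/
theorem divergence_free_of_pressure_poisson
    (Ω : Set (ℝ × ℝ)) (hΩ : IsOpen Ω) (hΩb : Bornology.IsBounded Ω)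
    (ν : ℝ) (hν : ν ≠ 0)
    (u : Fin 2 → ℝ × ℝ → ℝ) (P : ℝ × ℝ → ℝ) (f : Fin 2 → ℝ × ℝ → ℝ)
    (hu : ∀ i, ContDiffOn ℝ 3 (u i) Ω)
    (hP : ContDiffOn ℝ 2 P Ω)
    (hf : ∀ i, ContDiffOn ℝ 1 (f i) Ω)
    (W : ℝ × ℝ → ℝ)
    (hWcont : ContinuousOn W (closure Ω))
    (hWw : ∀ q ∈ Ω, W q = pd 0 (u 0) q + pd 1 (u 1) q)
    (hmom : ∀ i : Fin 2, ∀ q ∈ Ω, -ν * lap (u i) q + pd i P q = f i q)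
    (hppe : ∀ q ∈ Ω, lap P q = pd 0 (f 0) q + pd 1 (f 1) q)
    (hWbd : ∀ q ∈ frontier Ω, W q = 0) :
    ∀ q ∈ Ω, pd 0 (u 0) q + pd 1 (u 1) q = 0 := by
  set w : ℝ × ℝ → ℝ := fun p => pd 0 (u 0) p + pd 1 (u 1) p with hwdef
  have huAt : ∀ i : Fin 2, ∀ p ∈ Ω, ContDiffAt ℝ 3 (u i) p :=
    fun i p hp => (hu i).contDiffAt (hΩ.mem_nhds hp)
  have hPAt : ∀ p ∈ Ω, ContDiffAt ℝ 2 P p := fun p hp => hP.contDiffAt (hΩ.mem_nhds hp)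
  have hfAt : ∀ i : Fin 2, ∀ p ∈ Ω, ContDiffAt ℝ 1 (f i) p :=
    fun i p hp => (hf i).contDiffAt (hΩ.mem_nhds hp)
  have hw2At : ∀ p ∈ Ω, ContDiffAt ℝ 2 w p := fun p hp =>
    (contDiffAt_pd (n := 3) (m := 2) 0 (huAt 0 p hp) (by norm_num)).add
      (contDiffAt_pd (n := 3) (m := 2) 1 (huAt 1 p hp) (by norm_num))
  -- w is harmonic on Ω
  have hlapw : ∀ q ∈ Ω, lap w q = 0 := by
    intro q hq
    have hmem := hΩ.mem_nhds hq
    have hmom' : ∀ i : Fin 2, ∀ p ∈ Ω, lap (u i) p = (pd i P p - f i p) * ν⁻¹ := by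
      intro i p hp
      have h1 := hmom i p hp
      field_simp
      linarith
    have hBj : ∀ j : Fin 2, pd j (lap (u j)) q = (pd j (pd j P) q - pd j (f j) q) * ν⁻¹ := by
      intro j
      have heq : lap (u j) =ᶠ[𝓝 q] fun p => (pd j P p - f j p) * ν⁻¹ := by
        filter_upwards [hmem] with p hp using hmom' j p hp
      have hPd : DifferentiableAt ℝ (pd j P) q := diffAt_pd (n := 2) j (hPAt q hq) le_rfl
      have hfd : DifferentiableAt ℝ (f j) q := (hfAt j q hq).differentiableAt one_ne_zero
      rw [pd_congr heq j, pd_mul_const (f := fun p => pd j P p - f j p) (hPd.sub hfd) ν⁻¹ j, pd_sub hPd hfd j]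
    have hA : pd 0 (lap (u 0)) q + pd 1 (lap (u 1)) q = 0 := by
      rw [hBj 0, hBj 1]
      have hp' : pd 0 (pd 0 P) q + pd 1 (pd 1 P) q = pd 0 (f 0) q + pd 1 (f 1) q := hppe q hq
      linear_combination ν⁻¹ * hp'
    have hpd2w : ∀ j : Fin 2, pd j (pd j w) q =
        pd j (pd j (pd 0 (u 0))) q + pd j (pd j (pd 1 (u 1))) q := by
      intro j
      have heq : pd j w =ᶠ[𝓝 q] fun p => pd j (pd 0 (u 0)) p + pd j (pd 1 (u 1)) p := by
        filter_upwards [hmem] with p hp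
        exact pd_add (diffAt_pd (n := 3) 0 (huAt 0 p hp) (by norm_num))
          (diffAt_pd (n := 3) 1 (huAt 1 p hp) (by norm_num)) j
      rw [pd_congr heq j]
      exact pd_add
        (diffAt_pd (n := 2) j (contDiffAt_pd (n := 3) (m := 2) 0 (huAt 0 q hq) (by norm_num)) le_rfl)
        (diffAt_pd (n := 2) j (contDiffAt_pd (n := 3) (m := 2) 1 (huAt 1 q hq) (by norm_num)) le_rfl) j
    have hlapui : ∀ i : Fin 2, pd i (lap (u i)) q =
        pd i (pd 0 (pd 0 (u i))) q + pd i (pd 1 (pd 1 (u i))) q := by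
      intro i
      have hrfl : lap (u i) = fun p => pd 0 (pd 0 (u i)) p + pd 1 (pd 1 (u i)) p := rfl
      rw [hrfl]
      exact pd_add
        (diffAt_pd (n := 2) 0 (contDiffAt_pd (n := 3) (m := 2) 0 (huAt i q hq) (by norm_num)) le_rfl)
        (diffAt_pd (n := 2) 1 (contDiffAt_pd (n := 3) (m := 2) 1 (huAt i q hq) (by norm_num)) le_rfl) i
    have hswap1 : pd 1 (pd 1 (pd 0 (u 0))) q = pd 0 (pd 1 (pd 1 (u 0))) q := by
      have heq : pd 1 (pd 0 (u 0)) =ᶠ[𝓝 q] pd 0 (pd 1 (u 0)) := by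
        filter_upwards [hmem] with p hp
        exact pd_swap ((huAt 0 p hp).of_le (by norm_num)) 1 0
      rw [pd_congr heq 1]
      exact pd_swap (contDiffAt_pd (n := 3) (m := 2) 1 (huAt 0 q hq) (by norm_num)) 1 0
    have hswap2 : pd 0 (pd 0 (pd 1 (u 1))) q = pd 1 (pd 0 (pd 0 (u 1))) q := by
      have heq : pd 0 (pd 1 (u 1)) =ᶠ[𝓝 q] pd 1 (pd 0 (u 1)) := by
        filter_upwards [hmem] with p hp
        exact pd_swap ((huAt 1 p hp).of_le (by norm_num)) 0 1
      rw [pd_congr heq 0]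
      exact pd_swap (contDiffAt_pd (n := 3) (m := 2) 0 (huAt 1 q hq) (by norm_num)) 0 1
    show pd 0 (pd 0 w) q + pd 1 (pd 1 w) q = 0
    rw [hpd2w 0, hpd2w 1, hswap1, hswap2]
    have e0 := hlapui 0
    have e1 := hlapui 1
    linarith [hA, e0, e1]
  -- transfer to W
  have hW2 : ∀ p ∈ Ω, ContDiffAt ℝ 2 W p := fun p hp =>
    (hw2At p hp).congr_of_eventuallyEq
      (by filter_upwards [hΩ.mem_nhds hp] with r hr using hWw r hr)
  have hpdeq : ∀ p ∈ Ω, ∀ j : Fin 2, pd j W =ᶠ[𝓝 p] pd j w := by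
    intro p hp j
    filter_upwards [hΩ.mem_nhds hp] with r hr
    exact pd_congr (by filter_upwards [hΩ.mem_nhds hr] with s hs using hWw s hs) j
  have hlapW : ∀ p ∈ Ω, lap W p = 0 := by
    intro p hp
    show pd 0 (pd 0 W) p + pd 1 (pd 1 W) p = 0
    rw [pd_congr (hpdeq p hp 0) 0, pd_congr (hpdeq p hp 1) 1]
    exact hlapw p hp
  intro q hq
  have hle : W q ≤ 0 :=
    le_zero_of_subharmonic hΩ hΩb hWcont hW2 hlapW (fun p hp => le_of_eq (hWbd p hp)) q hq
  have hlapWneg : ∀ p ∈ Ω, lap (fun r => -W r) p = 0 := by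
    intro p hp
    have hfun : ∀ j : Fin 2, pd j (fun r => -W r) = fun r => -pd j W r :=
      fun j => funext fun r => pd_neg W r j
    show pd 0 (pd 0 (fun r => -W r)) p + pd 1 (pd 1 (fun r => -W r)) p = 0
    rw [hfun 0, hfun 1]
    have h0 : pd 0 (fun r => -pd 0 W r) p = -pd 0 (pd 0 W) p := pd_neg (pd 0 W) p 0
    have h1 : pd 1 (fun r => -pd 1 W r) p = -pd 1 (pd 1 W) p := pd_neg (pd 1 W) p 1
    rw [h0, h1]
    have := hlapW p hp
    show -pd 0 (pd 0 W) p + -pd 1 (pd 1 W) p = 0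
    have h2 : pd 0 (pd 0 W) p + pd 1 (pd 1 W) p = 0 := this
    linarith
  have hge : -W q ≤ 0 :=
    le_zero_of_subharmonic hΩ hΩb hWcont.neg (fun p hp => (hW2 p hp).neg) hlapWneg
      (fun p hp => by rw [Pi.neg_apply, hWbd p hp]; norm_num) q hq
  have hW0 : W q = 0 := le_antisymm hle (by linarith)
  have := hWw q hq
  rw [← this]
  exact hW0
end

section
/- Let m be a positive integer, let (x₀,y₀), (x₁,y₁), …, (x_m,y_m) ∈ ℝ² and ω₁, …, ω_m ∈ ℝ, and set hₖ = xₖ − x₀, lₖ = yₖ − y₀, and Vₖ = (hₖ, lₖ, hₖ²/2, lₖ²/2, hₖlₖ) ∈ ℝ⁵. Let A = Σ_{k=1}^{m} ωₖ² Vₖ Vₖᵀ and assume A is invertible. Let P(x,y) = a₀ + a₁(x−x₀) + a₂(y−y₀) + a₃(x−x₀)² + a₄(y−y₀)² + a₅(x−x₀)(y−y₀) be any bivariate polynomial of total degree at most 2, set cₖ = P(x₀,y₀) − P(xₖ,yₖ), and b = −Σ_{k=1}^{m} ωₖ² cₖ Vₖ. Then the unique solution D of A D = b equals the vector of exact derivatives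 of P at (x₀,y₀): D = (∂P/∂x, ∂P/∂y, ∂²P/∂x², ∂²P/∂y², ∂²P/∂x∂y)(x₀,y₀) = (a₁, a₂, 2a₃, 2a₄, a₅). -/
open Matrix

set_option maxHeartbeats 1600000

/-- Exactness of the second-order GFDM on quadratic polynomials: with stencil vectors
`Vₖ = (hₖ, lₖ, hₖ²/2, lₖ²/2, hₖlₖ)`, invertible normal matrix `A = Σₖ ωₖ² Vₖ Vₖᵀ`,
and right-hand side `b = −Σₖ ωₖ² cₖ Vₖ` built from `cₖ = P(x₀,y₀) − P(xₖ,yₖ)` for a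
polynomial `P` of total degree at most 2, the unique solution `D` of `A D = b` equals the
vector of exact derivatives `(∂P/∂x, ∂P/∂y, ∂²P/∂x², ∂²P/∂y², ∂²P/∂x∂y)(x₀,y₀)
= (a₁, a₂, 2a₃, 2a₄, a₅)`. -/
theorem gfdm2_exact_on_quadratics
    (m : ℕ) (hm : 0 < m)
    (x0 y0 : ℝ) (x y : Fin m → ℝ) (ω : Fin m → ℝ)
    (V : Fin m → Fin 5 → ℝ)
    (hV : ∀ k, V k = ![x k - x0, y k - y0, (x k - x0) ^ 2 / 2, (y k - y0) ^ 2 / 2,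
      (x k - x0) * (y k - y0)])
    (A : Matrix (Fin 5) (Fin 5) ℝ)
    (hA : A = ∑ k, ω k ^ 2 • vecMulVec (V k) (V k))
    (hAinv : IsUnit A)
    (a0 a1 a2 a3 a4 a5 : ℝ) (P : ℝ → ℝ → ℝ)
    (hP : ∀ X Y : ℝ, P X Y = a0 + a1 * (X - x0) + a2 * (Y - y0)
      + a3 * (X - x0) ^ 2 + a4 * (Y - y0) ^ 2 + a5 * (X - x0) * (Y - y0))
    (c : Fin m → ℝ) (hc : ∀ k, c k = P x0 y0 - P (x k) (y k))
    (b : Fin 5 → ℝ) (hb : b = -∑ k, ω k ^ 2 • c k • V k) :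
    ∀ D : Fin 5 → ℝ, A *ᵥ D = b ↔ D = ![a1, a2, 2 * a3, 2 * a4, a5] := by
  intro D
  have key : A *ᵥ ![a1, a2, 2 * a3, 2 * a4, a5] = b := by
    subst hA hb
    funext i
    simp only [mulVec, dotProduct, Matrix.sum_apply, Finset.sum_apply, Pi.smul_apply,
      Pi.neg_apply, Matrix.smul_apply, vecMulVec_apply, smul_eq_mul, Finset.sum_mul,
      ← Finset.sum_neg_distrib]
    rw [Finset.sum_comm]
    refine Finset.sum_congr rfl fun k _ => ?_
    have hck : c k = -(a1 * (x k - x0) + a2 * (y k - y0) + a3 * (x k - x0) ^ 2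
        + a4 * (y k - y0) ^ 2 + a5 * (x k - x0) * (y k - y0)) := by
      rw [hc, hP, hP]; ring
    rw [hck, hV]
    fin_cases i <;>
      simp [Fin.sum_univ_five, Matrix.cons_val_zero, Matrix.cons_val_one] <;> ring
  have hinj : Function.Injective (A.mulVec) := by
    intro u v huv
    have hI : A⁻¹ * A = 1 := Matrix.nonsing_inv_mul A
      ((Matrix.isUnit_iff_isUnit_det A).mp hAinv)
    have := congrArg (fun w => A⁻¹ *ᵥ w) huv
    simpa [Matrix.mulVec_mulVec, hI] using this
  constructor
  · intro h
    exact hinj (h.trans key.symm)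
  · rintro rfl
    exact key
end

section
/- Let n, m be positive integers, let z₀, z₁, …, z_m ∈ ℝ² and ω₁, …, ω_m ∈ ℝ. Write zₖ − z₀ = (hₖ, lₖ), and index the unknown derivatives by multi-indices α = (α₁,α₂) ∈ ℕ² with 1 ≤ α₁+α₂ ≤ 2n; let N be the number of such multi-indices. Define the stencil vector Vₖ ∈ ℝᴺ by Vₖ(α) = hₖ^{α₁} lₖ^{α₂} / (α₁! α₂!), and let A = Σ_{k=1}^{m} ωₖ² Vₖ Vₖᵀ be invertible. Let P : ℝ² → ℝ be any bivariate polynomial of total degree at most 2n, set cₖ = P(z₀) − P(zₖ) and b = −Σ_{k=1}^{m} ωₖ² cₖ Vₖ. Then the unique solution D of A D = b satisfies D(α) = ∂^{α₁+α₂}P/∂x^{α₁}∂y^{α₂}(z₀) for every multi-index α with 1 ≤ α₁+α₂ ≤ 2n. -/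
open Matrix

/-- Multi-indices `α = (α₁,α₂)` with `1 ≤ α₁+α₂ ≤ 2n`, indexing the unknown derivatives of the
`2n`-th order GFDM. -/
abbrev GFDMIdx (n : ℕ) :=
  {α : Fin (2 * n + 1) × Fin (2 * n + 1) //
    1 ≤ (α.1 : ℕ) + (α.2 : ℕ) ∧ (α.1 : ℕ) + (α.2 : ℕ) ≤ 2 * n}

/-- Multi-indices `α = (α₁,α₂)` with `0 ≤ α₁+α₂ ≤ 2n`. -/
abbrev GFDMIdxLe (n : ℕ) :=
  {α : Fin (2 * n + 1) × Fin (2 * n + 1) // (α.1 : ℕ) + (α.2 : ℕ) ≤ 2 * n}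

/-- Partial derivative in the first coordinate of a scalar field on `ℝ²`. -/
noncomputable def pdx (f : ℝ × ℝ → ℝ) : ℝ × ℝ → ℝ :=
  fun p => fderiv ℝ f p ((1 : ℝ), (0 : ℝ))

/-- Partial derivative in the second coordinate of a scalar field on `ℝ²`. -/
noncomputable def pdy (f : ℝ × ℝ → ℝ) : ℝ × ℝ → ℝ :=
  fun p => fderiv ℝ f p ((0 : ℝ), (1 : ℝ))

/-- Iterated partial derivative `∂^{a₁+a₂} f / ∂x^{a₁} ∂y^{a₂}`. -/
noncomputable def pda (a : ℕ × ℕ) (f : ℝ × ℝ → ℝ) : ℝ × ℝ → ℝ :=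
  pdx^[a.1] (pdy^[a.2] f)

/-! ### Auxiliary lemmas -/

/-- The monomial `(x-x₀)^i (y-y₀)^j`. -/
def gmono (x0 y0 : ℝ) (i j : ℕ) : ℝ × ℝ → ℝ :=
  fun q => (q.1 - x0) ^ i * (q.2 - y0) ^ j

lemma hasFDerivAt_gmono (x0 y0 : ℝ) (i j : ℕ) (p : ℝ × ℝ) :
    HasFDerivAt (gmono x0 y0 i j)
      (((p.1 - x0) ^ i) •
          ((((j : ℝ) * (p.2 - y0) ^ (j - 1) * 1)) • (ContinuousLinearMap.snd ℝ ℝ ℝ)) +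
        ((p.2 - y0) ^ j) •
          ((((i : ℝ) * (p.1 - x0) ^ (i - 1) * 1)) • (ContinuousLinearMap.fst ℝ ℝ ℝ))) p := by
  have hx : HasFDerivAt (fun q : ℝ × ℝ => (q.1 - x0) ^ i)
      ((((i : ℝ) * (p.1 - x0) ^ (i - 1) * 1)) • (ContinuousLinearMap.fst ℝ ℝ ℝ)) p := by
    have h1 : HasDerivAt (fun t : ℝ => (t - x0) ^ i)
        ((i : ℝ) * (p.1 - x0) ^ (i - 1) * 1) p.1 :=
      ((hasDerivAt_id p.1).sub_const x0).pow i
    exact h1.comp_hasFDerivAt p (hasFDerivAt_fst)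
  have hy : HasFDerivAt (fun q : ℝ × ℝ => (q.2 - y0) ^ j)
      ((((j : ℝ) * (p.2 - y0) ^ (j - 1) * 1)) • (ContinuousLinearMap.snd ℝ ℝ ℝ)) p := by
    have h1 : HasDerivAt (fun t : ℝ => (t - y0) ^ j)
        ((j : ℝ) * (p.2 - y0) ^ (j - 1) * 1) p.2 :=
      ((hasDerivAt_id p.2).sub_const y0).pow j
    exact h1.comp_hasFDerivAt p (hasFDerivAt_snd)
  exact hx.mul hy

lemma pdx_sum_gmono {ι : Type*} (s : Finset ι) (x0 y0 : ℝ) (c : ι → ℝ) (i j : ι → ℕ) :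
    pdx (fun q => ∑ β ∈ s, c β * gmono x0 y0 (i β) (j β) q)
      = fun q => ∑ β ∈ s, (c β * (i β : ℝ)) * gmono x0 y0 (i β - 1) (j β) q := by
  funext p
  have H : HasFDerivAt (fun q => ∑ β ∈ s, c β * gmono x0 y0 (i β) (j β) q)
      (∑ β ∈ s, (c β) •
        (((p.1 - x0) ^ (i β)) •
            ((((j β : ℝ) * (p.2 - y0) ^ (j β - 1) * 1)) • (ContinuousLinearMap.snd ℝ ℝ ℝ)) +
          ((p.2 - y0) ^ (j β)) •
            ((((i β : ℝ) * (p.1 - x0) ^ (i β - 1) * 1)) • (ContinuousLinearMap.fst ℝ ℝ ℝ)))) p :=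
    HasFDerivAt.fun_sum fun β _ => (hasFDerivAt_gmono x0 y0 (i β) (j β) p).const_mul (c β)
  rw [pdx, H.fderiv]
  simp only [ContinuousLinearMap.sum_apply, ContinuousLinearMap.smul_apply,
    ContinuousLinearMap.add_apply, ContinuousLinearMap.coe_fst', ContinuousLinearMap.coe_snd',
    smul_eq_mul, gmono]
  refine Finset.sum_congr rfl fun β _ => ?_
  ring

lemma pdy_sum_gmono {ι : Type*} (s : Finset ι) (x0 y0 : ℝ) (c : ι → ℝ) (i j : ι → ℕ) :
    pdy (fun q => ∑ β ∈ s, c β * gmono x0 y0 (i β) (j β) q)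
      = fun q => ∑ β ∈ s, (c β * (j β : ℝ)) * gmono x0 y0 (i β) (j β - 1) q := by
  funext p
  have H : HasFDerivAt (fun q => ∑ β ∈ s, c β * gmono x0 y0 (i β) (j β) q)
      (∑ β ∈ s, (c β) •
        (((p.1 - x0) ^ (i β)) •
            ((((j β : ℝ) * (p.2 - y0) ^ (j β - 1) * 1)) • (ContinuousLinearMap.snd ℝ ℝ ℝ)) +
          ((p.2 - y0) ^ (j β)) •
            ((((i β : ℝ) * (p.1 - x0) ^ (i β - 1) * 1)) • (ContinuousLinearMap.fst ℝ ℝ ℝ)))) p :=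
    HasFDerivAt.fun_sum fun β _ => (hasFDerivAt_gmono x0 y0 (i β) (j β) p).const_mul (c β)
  rw [pdy, H.fderiv]
  simp only [ContinuousLinearMap.sum_apply, ContinuousLinearMap.smul_apply,
    ContinuousLinearMap.add_apply, ContinuousLinearMap.coe_fst', ContinuousLinearMap.coe_snd',
    smul_eq_mul, gmono]
  refine Finset.sum_congr rfl fun β _ => ?_
  ring

lemma pdy_iter_sum_gmono {ι : Type*} (s : Finset ι) (x0 y0 : ℝ) (c : ι → ℝ) (i j : ι → ℕ)
    (t : ℕ) :
    pdy^[t] (fun q => ∑ β ∈ s, c β * gmono x0 y0 (i β) (j β) q)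
      = fun q => ∑ β ∈ s, (c β * ((j β).descFactorial t : ℝ)) * gmono x0 y0 (i β) (j β - t) q := by
  induction t with
  | zero => simp
  | succ t ih =>
    rw [Function.iterate_succ_apply', ih, pdy_sum_gmono]
    funext q
    refine Finset.sum_congr rfl fun β _ => ?_
    rw [Nat.descFactorial_succ]
    push_cast
    rw [Nat.sub_sub]
    ring

lemma pdx_iter_sum_gmono {ι : Type*} (s : Finset ι) (x0 y0 : ℝ) (c : ι → ℝ) (i j : ι → ℕ)
    (t : ℕ) :
    pdx^[t] (fun q => ∑ β ∈ s, c β * gmono x0 y0 (i β) (j β) q)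
      = fun q => ∑ β ∈ s, (c β * ((i β).descFactorial t : ℝ)) * gmono x0 y0 (i β - t) (j β) q := by
  induction t with
  | zero => simp
  | succ t ih =>
    rw [Function.iterate_succ_apply', ih, pdx_sum_gmono]
    funext q
    refine Finset.sum_congr rfl fun β _ => ?_
    rw [Nat.descFactorial_succ]
    push_cast
    rw [Nat.sub_sub]
    ring

lemma pda_sum_gmono {ι : Type*} (s : Finset ι) (x0 y0 : ℝ) (c : ι → ℝ) (i j : ι → ℕ)
    (a1 a2 : ℕ) :
    pda (a1, a2) (fun q => ∑ β ∈ s, c β * gmono x0 y0 (i β) (j β) q)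
      = fun q => ∑ β ∈ s,
          (c β * ((j β).descFactorial a2 : ℝ) * ((i β).descFactorial a1 : ℝ))
            * gmono x0 y0 (i β - a1) (j β - a2) q := by
  rw [pda, pdy_iter_sum_gmono, pdx_iter_sum_gmono]

lemma gmono_self (x0 y0 : ℝ) (i j : ℕ) :
    gmono x0 y0 i j (x0, y0) = if i = 0 ∧ j = 0 then 1 else 0 := by
  simp only [gmono, sub_self]
  by_cases hi : i = 0
  · by_cases hj : j = 0
    · simp [hi, hj]
    · simp [hi, zero_pow hj, hj]
  · simp [zero_pow hi, hi]

/-- Exactness of the `2n`-th order GFDM on polynomials of total degree at most `2n`: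
with stencil vectors `Vₖ(α) = hₖ^{α₁} lₖ^{α₂}/(α₁!α₂!)`, invertible normal matrix
`A = Σₖ ωₖ² Vₖ Vₖᵀ`, and `b = −Σₖ ωₖ² cₖ Vₖ` built from `cₖ = P(z₀) − P(zₖ)`, the unique
solution `D` of `A D = b` satisfies `D(α) = ∂^α P(z₀)` for all `α` with `1 ≤ |α| ≤ 2n`. -/
theorem gfdm2n_exact_on_polynomials
    (n m : ℕ) (hn : 0 < n) (hm : 0 < m)
    (z0 : ℝ × ℝ) (z : Fin m → ℝ × ℝ) (ω : Fin m → ℝ)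
    (V : Fin m → GFDMIdx n → ℝ)
    (hV : ∀ k (α : GFDMIdx n),
      V k α = ((z k).1 - z0.1) ^ (α.1.1 : ℕ) * ((z k).2 - z0.2) ^ (α.1.2 : ℕ)
        / ((Nat.factorial (α.1.1 : ℕ) : ℝ) * (Nat.factorial (α.1.2 : ℕ) : ℝ)))
    (A : Matrix (GFDMIdx n) (GFDMIdx n) ℝ)
    (hA : A = ∑ k, ω k ^ 2 • vecMulVec (V k) (V k))
    (hAinv : IsUnit A)
    (a : GFDMIdxLe n → ℝ) (P : ℝ × ℝ → ℝ)
    (hP : ∀ q : ℝ × ℝ, P q = ∑ β : GFDMIdxLe n,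
      a β * (q.1 - z0.1) ^ (β.1.1 : ℕ) * (q.2 - z0.2) ^ (β.1.2 : ℕ))
    (c : Fin m → ℝ) (hc : ∀ k, c k = P z0 - P (z k))
    (b : GFDMIdx n → ℝ) (hb : b = -∑ k, ω k ^ 2 • c k • V k) :
    ∀ D : GFDMIdx n → ℝ, A *ᵥ D = b →
      ∀ α : GFDMIdx n, D α = pda ((α.1.1 : ℕ), (α.1.2 : ℕ)) P z0 := by
  intro D hD α
  -- the embedding of indices
  set e : GFDMIdx n → GFDMIdxLe n := fun α => ⟨α.1, α.2.2⟩ with he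
  -- the "true derivative" vector
  set Dt : GFDMIdx n → ℝ :=
    fun α => a (e α) * (Nat.factorial (α.1.1 : ℕ) : ℝ) * (Nat.factorial (α.1.2 : ℕ) : ℝ)
    with hDt
  -- P as a sum of monomials
  have hPm : P = fun q => ∑ β : GFDMIdxLe n,
      a β * gmono z0.1 z0.2 (β.1.1 : ℕ) (β.1.2 : ℕ) q := by
    funext q
    rw [hP q]
    exact Finset.sum_congr rfl fun β _ => by rw [gmono]; ring
  -- Step 1: the iterated partial derivatives of P at z0
  have hpda : ∀ α : GFDMIdx n, pda ((α.1.1 : ℕ), (α.1.2 : ℕ)) P z0 = Dt α := by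
    intro α
    rw [hPm, pda_sum_gmono]
    beta_reduce
    have hz0 : z0 = (z0.1, z0.2) := rfl
    rw [Finset.sum_eq_single (e α)]
    · rw [hz0, gmono_self]
      simp only [he, Nat.sub_self, and_self, if_true, mul_one,
        Nat.descFactorial_self, hDt]
      ring
    · intro β _ hβ
      rcases Nat.lt_or_ge (β.1.2 : ℕ) (α.1.2 : ℕ) with h2 | h2
      · simp [Nat.descFactorial_eq_zero_iff_lt.mpr h2]
      rcases Nat.lt_or_ge (β.1.1 : ℕ) (α.1.1 : ℕ) with h1 | h1
      · simp [Nat.descFactorial_eq_zero_iff_lt.mpr h1]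
      rcases Nat.lt_or_ge (α.1.1 : ℕ) (β.1.1 : ℕ) with h1' | h1'
      · rw [hz0, gmono_self, if_neg, mul_zero]
        rintro ⟨hx, -⟩
        omega
      rcases Nat.lt_or_ge (α.1.2 : ℕ) (β.1.2 : ℕ) with h2' | h2'
      · rw [hz0, gmono_self, if_neg, mul_zero]
        rintro ⟨-, hy⟩
        omega
      · exfalso
        apply hβ
        have hx : (β.1.1 : ℕ) = (α.1.1 : ℕ) := le_antisymm (by omega) h1
        have hy : (β.1.2 : ℕ) = (α.1.2 : ℕ) := le_antisymm (by omega) h2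
        ext
        · exact hx
        · exact hy
    · intro h
      exact absurd (Finset.mem_univ (e α)) h
  -- Step 2: A *ᵥ Dt = b
  have key : A *ᵥ Dt = b := by
    funext γ
    have hβ0 : ((0 : Fin (2 * n + 1)) : ℕ) + ((0 : Fin (2 * n + 1)) : ℕ) ≤ 2 * n := by simp
    set β0 : GFDMIdxLe n := ⟨(0, 0), hβ0⟩ with hβ0def
    -- the crucial per-node identity
    have node : ∀ k : Fin m, ∑ α' : GFDMIdx n, V k α' * Dt α' = P (z k) - P z0 := by
      intro k
      -- simplify V k α' * Dt α'
      have hterm : ∀ α' : GFDMIdx n, V k α' * Dt α'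
          = a (e α') * ((z k).1 - z0.1) ^ ((e α').1.1 : ℕ)
              * ((z k).2 - z0.2) ^ ((e α').1.2 : ℕ) := by
        intro α'
        rw [hV, hDt]
        have hf1 : ((Nat.factorial (α'.1.1 : ℕ) : ℝ)) ≠ 0 :=
          Nat.cast_ne_zero.mpr (Nat.factorial_ne_zero _)
        have hf2 : ((Nat.factorial (α'.1.2 : ℕ) : ℝ)) ≠ 0 :=
          Nat.cast_ne_zero.mpr (Nat.factorial_ne_zero _)
        field_simp
        ring
      -- P z0 = a β0
      have hPz0 : P z0 = a β0 := by
        rw [hP z0]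
        rw [Finset.sum_eq_single β0]
        · simp [hβ0def]
        · intro β _ hβ
          have : ¬((β.1.1 : ℕ) = 0 ∧ (β.1.2 : ℕ) = 0) := by
            intro ⟨hx, hy⟩
            apply hβ
            ext
            · exact hx
            · exact hy
          simp only [sub_self]
          rcases Nat.eq_zero_or_pos (β.1.1 : ℕ) with hx | hx
          · rcases Nat.eq_zero_or_pos (β.1.2 : ℕ) with hy | hy
            · exact absurd ⟨hx, hy⟩ this
            · rw [zero_pow hy.ne', mul_zero]
          · rw [zero_pow hx.ne', mul_zero, zero_mul]
        · intro h
          exact absurd (Finset.mem_univ β0) h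
      -- P (z k) as a sum, split off β0
      have hβ0mem : β0 ∈ (Finset.univ : Finset (GFDMIdxLe n)) := Finset.mem_univ _
      have hPzk : P (z k)
          = a β0 + ∑ β ∈ Finset.univ.erase β0,
              a β * ((z k).1 - z0.1) ^ (β.1.1 : ℕ) * ((z k).2 - z0.2) ^ (β.1.2 : ℕ) := by
        rw [hP (z k), ← Finset.add_sum_erase _ _ hβ0mem]
        congr 1
        simp [hβ0def]
      -- the bijection between GFDMIdx n and univ.erase β0
      have hbij : ∑ α' : GFDMIdx n,
          a (e α') * ((z k).1 - z0.1) ^ ((e α').1.1 : ℕ)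
            * ((z k).2 - z0.2) ^ ((e α').1.2 : ℕ)
          = ∑ β ∈ Finset.univ.erase β0,
              a β * ((z k).1 - z0.1) ^ (β.1.1 : ℕ) * ((z k).2 - z0.2) ^ (β.1.2 : ℕ) := by
        refine Finset.sum_bij' (fun α' _ => e α') (fun β hβ => ⟨β.1, ?_, β.2⟩) ?_ ?_ ?_ ?_ ?_
        · -- 1 ≤ sum from β ≠ β0
          have hne : β ≠ β0 := (Finset.mem_erase.mp hβ).1
          by_contra h
          apply hne
          have hx : (β.1.1 : ℕ) = 0 := by omega
          have hy : (β.1.2 : ℕ) = 0 := by omega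
          ext
          · exact hx
          · exact hy
        · intro α' _
          refine Finset.mem_erase.mpr ⟨?_, Finset.mem_univ _⟩
          intro h
          have h1 := α'.2.1
          have hx : ((α'.1.1 : ℕ)) = 0 := by
            have := congrArg (fun β : GFDMIdxLe n => ((β.1.1 : ℕ))) h
            simpa [he, hβ0def] using this
          have hy : ((α'.1.2 : ℕ)) = 0 := by
            have := congrArg (fun β : GFDMIdxLe n => ((β.1.2 : ℕ))) h
            simpa [he, hβ0def] using this
          omega
        · intro β hβ
          exact Finset.mem_univ _
        · intro α' _
          rfl
        · intro β hβ
          rfl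
        · intro α' _
          rfl
      rw [hPzk, hPz0]
      rw [← hbij]
      rw [Finset.sum_congr rfl fun α' _ => hterm α']
      ring
    -- now compute both sides at γ
    have lhs : (A *ᵥ Dt) γ = ∑ k, ω k ^ 2 * V k γ * (∑ α' : GFDMIdx n, V k α' * Dt α') := by
      rw [hA]
      simp only [Matrix.mulVec, dotProduct, Matrix.sum_apply, Matrix.smul_apply,
        Matrix.vecMulVec_apply, smul_eq_mul, Finset.sum_mul]
      rw [Finset.sum_comm]
      refine Finset.sum_congr rfl fun k _ => ?_
      rw [Finset.mul_sum]
      refine Finset.sum_congr rfl fun α' _ => ?_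
      ring
    have rhs : b γ = ∑ k, ω k ^ 2 * V k γ * (P (z k) - P z0) := by
      rw [hb]
      simp only [Pi.neg_apply, Finset.sum_apply, Pi.smul_apply, smul_eq_mul]
      rw [← Finset.sum_neg_distrib]
      refine Finset.sum_congr rfl fun k _ => ?_
      rw [hc k]
      ring
    rw [lhs, rhs]
    exact Finset.sum_congr rfl fun k _ => by rw [node k]
  -- Step 3: conclude D = Dt by invertibility
  have : D = Dt := by
    have hInv : Invertible A := hAinv.invertible
    have h1 : A *ᵥ D = A *ᵥ Dt := by rw [hD, key]
    have h2 := congrArg (fun v => (⅟A) *ᵥ v) h1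
    simpa [Matrix.mulVec_mulVec, Matrix.one_mulVec] using h2
  rw [this, hpda α]
end

section
/- Under the setup of the 2n-th order GFDM error identity, assume in addition that A is invertible, that ‖zₖ − z₀‖ ≤ ρ for all k, and that the Taylor remainders satisfy |Rₖ| ≤ M ‖zₖ − z₀‖^{2n+1} for some constant M ≥ 0. Then the computed derivative vector D = A⁻¹b satisfies the error bound ‖D − D*‖ ≤ ‖A⁻¹‖ · M · ρ^{2n+1} · Σ_{k=1}^{m} ωₖ² ‖Vₖ‖, where ‖A⁻¹‖ denotes the operator norm of A⁻¹ on ℝᴺ with the Euclidean norm. -/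
open Matrix

/-- The Euclidean norm of a vector in `ℝᴺ`. -/
noncomputable def euclNorm {ι : Type*} [Fintype ι] (x : ι → ℝ) : ℝ :=
  Real.sqrt (∑ i, x i ^ 2)

lemma euclNorm_eq {ι : Type*} [Fintype ι] (x : ι → ℝ) :
    euclNorm x = ‖(WithLp.equiv 2 (ι → ℝ)).symm x‖ := by
  rw [EuclideanSpace.norm_eq]
  simp [euclNorm, sq_abs]

set_option maxHeartbeats 1000000 in
lemma sum_split (n : ℕ) (g : GFDMIdxLe n → ℝ) :
    ∑ β : GFDMIdxLe n, g β
      = g ⟨(0, 0), by simp⟩ + ∑ α : GFDMIdx n, g ⟨α.1, α.2.2⟩ := by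
  classical
  rw [← Finset.add_sum_erase _ g (Finset.mem_univ ⟨(0,0), by simp⟩)]
  congr 1
  apply Finset.sum_bij' (i := fun (β : GFDMIdxLe n)
      (hβ : β ∈ (Finset.univ.erase ⟨(0,0), by simp⟩)) => (⟨β.1, by
      refine ⟨?_, β.2⟩
      rcases Nat.eq_zero_or_pos ((β.1.1 : ℕ) + (β.1.2 : ℕ)) with h | h
      · exfalso
        have h1 : (β.1.1 : ℕ) = 0 := by omega
        have h2 : (β.1.2 : ℕ) = 0 := by omega
        have : β = ⟨(0,0), by simp⟩ := by
          ext
          · exact h1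
          · exact h2
        exact (Finset.mem_erase.mp hβ).1 this
      · exact h⟩ : GFDMIdx n))
    (j := fun (α : GFDMIdx n) _ => (⟨α.1, α.2.2⟩ : GFDMIdxLe n))
  · intro a ha; exact Finset.mem_univ _
  · intro a ha; rfl
  · intro a ha; rfl
  · intro a ha; rfl
  · intro a ha
    refine Finset.mem_erase.mpr ⟨fun h => ?_, Finset.mem_univ _⟩
    have h1 := congrArg Subtype.val h
    have h2 := a.2.1
    rw [h1] at h2
    simp at h2

/-- Error bound for the `2n`-th order GFDM: under the setup of the GFDM error identity, if `A`
is invertible, `‖zₖ − z₀‖ ≤ ρ` for all `k`, and the Taylor remainders satisfy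
`|Rₖ| ≤ M ‖zₖ − z₀‖^{2n+1}`, then the computed derivative vector `D = A⁻¹ b` satisfies
`‖D − D*‖ ≤ ‖A⁻¹‖ · M · ρ^{2n+1} · Σₖ ωₖ² ‖Vₖ‖`, with Euclidean vector norms and the
Euclidean operator norm for `A⁻¹`. -/
theorem gfdm2n_error_bound
    (n m : ℕ) (hn : 0 < n) (hm : 0 < m)
    (z0 : ℝ × ℝ) (z : Fin m → ℝ × ℝ) (ω : Fin m → ℝ)
    (u : ℝ × ℝ → ℝ)
    (hu : ∃ U : Set (ℝ × ℝ), IsOpen U ∧ z0 ∈ U ∧ ContDiffOn ℝ (2 * n : ℕ) u U)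
    (V : Fin m → GFDMIdx n → ℝ)
    (hV : ∀ k (α : GFDMIdx n),
      V k α = ((z k).1 - z0.1) ^ (α.1.1 : ℕ) * ((z k).2 - z0.2) ^ (α.1.2 : ℕ)
        / ((Nat.factorial (α.1.1 : ℕ) : ℝ) * (Nat.factorial (α.1.2 : ℕ) : ℝ)))
    (A : Matrix (GFDMIdx n) (GFDMIdx n) ℝ)
    (hA : A = ∑ k, ω k ^ 2 • vecMulVec (V k) (V k))
    (hAinv : IsUnit A)
    (b : GFDMIdx n → ℝ)
    (hb : b = -∑ k, ω k ^ 2 • (u z0 - u (z k)) • V k)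
    (Dstar : GFDMIdx n → ℝ)
    (hDstar : ∀ α : GFDMIdx n, Dstar α = pda ((α.1.1 : ℕ), (α.1.2 : ℕ)) u z0)
    (R : Fin m → ℝ)
    (hRdef : ∀ k, R k = u (z k) - ∑ β : GFDMIdxLe n,
      pda ((β.1.1 : ℕ), (β.1.2 : ℕ)) u z0
          / ((Nat.factorial (β.1.1 : ℕ) : ℝ) * (Nat.factorial (β.1.2 : ℕ) : ℝ))
        * ((z k).1 - z0.1) ^ (β.1.1 : ℕ) * ((z k).2 - z0.2) ^ (β.1.2 : ℕ))
    (ρ M : ℝ) (hM : 0 ≤ M)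
    (hρ : ∀ k, ‖z k - z0‖ ≤ ρ)
    (hRbd : ∀ k, |R k| ≤ M * ‖z k - z0‖ ^ (2 * n + 1))
    (D : GFDMIdx n → ℝ) (hD : D = A⁻¹ *ᵥ b) :
    euclNorm (D - Dstar)
      ≤ ‖Matrix.toEuclideanCLM (𝕜 := ℝ) A⁻¹‖ * M * ρ ^ (2 * n + 1)
        * ∑ k, ω k ^ 2 * euclNorm (V k) := by
  classical
  -- Taylor expansion rewritten
  have hT : ∀ k, u (z k) - u z0 = (∑ α' : GFDMIdx n, V k α' * Dstar α') + R k := by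
    intro k
    have h0 := hRdef k
    rw [sum_split n (fun β => pda ((β.1.1 : ℕ), (β.1.2 : ℕ)) u z0
          / ((Nat.factorial (β.1.1 : ℕ) : ℝ) * (Nat.factorial (β.1.2 : ℕ) : ℝ))
        * ((z k).1 - z0.1) ^ (β.1.1 : ℕ) * ((z k).2 - z0.2) ^ (β.1.2 : ℕ))] at h0
    have hzero : pda ((((0 : Fin (2*n+1)) : ℕ)), (((0 : Fin (2*n+1)) : ℕ))) u z0
          / ((Nat.factorial (((0 : Fin (2*n+1)) : ℕ)) : ℝ)
            * (Nat.factorial (((0 : Fin (2*n+1)) : ℕ)) : ℝ))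
        * ((z k).1 - z0.1) ^ (((0 : Fin (2*n+1)) : ℕ))
        * ((z k).2 - z0.2) ^ (((0 : Fin (2*n+1)) : ℕ)) = u z0 := by
      simp [pda]
    have hterm : ∀ α' : GFDMIdx n,
        pda ((α'.1.1 : ℕ), (α'.1.2 : ℕ)) u z0
          / ((Nat.factorial (α'.1.1 : ℕ) : ℝ) * (Nat.factorial (α'.1.2 : ℕ) : ℝ))
        * ((z k).1 - z0.1) ^ (α'.1.1 : ℕ) * ((z k).2 - z0.2) ^ (α'.1.2 : ℕ)
        = V k α' * Dstar α' := by
      intro α'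
      rw [hV, hDstar]
      ring
    simp only [hzero] at h0
    rw [Finset.sum_congr rfl (fun α' _ => hterm α')] at h0
    linarith [h0]
  -- the residual vector identity
  have key : b = A *ᵥ Dstar + ∑ k, (ω k ^ 2 * R k) • V k := by
    funext α
    simp only [hb, hA, Pi.add_apply, Pi.neg_apply, Finset.sum_apply, Matrix.sum_apply,
      Pi.smul_apply, Matrix.smul_apply, smul_eq_mul, mulVec, dotProduct, vecMulVec_apply]
    simp_rw [Finset.sum_mul]
    rw [Finset.sum_comm, ← Finset.sum_add_distrib, ← Finset.sum_neg_distrib]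
    refine Finset.sum_congr rfl fun k _ => ?_
    have expand : ∑ α' : GFDMIdx n, ω k ^ 2 * (V k α * V k α') * Dstar α'
        = ω k ^ 2 * V k α * ∑ α' : GFDMIdx n, V k α' * Dstar α' := by
      rw [Finset.mul_sum]
      exact Finset.sum_congr rfl fun a _ => by ring
    rw [expand]
    have hk : u z0 - u (z k) = -((∑ α' : GFDMIdx n, V k α' * Dstar α') + R k) := by
      linarith [hT k]
    rw [hk]
    ring
  -- D - Dstar = A⁻¹ *ᵥ residual
  set r : GFDMIdx n → ℝ := ∑ k, (ω k ^ 2 * R k) • V k with hr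
  have hDs : D - Dstar = A⁻¹ *ᵥ r := by
    rw [hD, key, mulVec_add, mulVec_mulVec,
      Matrix.nonsing_inv_mul A ((Matrix.isUnit_iff_isUnit_det A).mp hAinv), one_mulVec]
    abel
  have hρ0 : 0 ≤ ρ := le_trans (norm_nonneg _) (hρ ⟨0, hm⟩)
  -- pass to EuclideanSpace
  have hnorm : euclNorm (D - Dstar)
      ≤ ‖Matrix.toEuclideanCLM (𝕜 := ℝ) A⁻¹‖ * ‖(WithLp.equiv 2 (GFDMIdx n → ℝ)).symm r‖ := by
    rw [euclNorm_eq, hDs, ← Matrix.toLin'_apply, ← (show ∀ x, Matrix.toEuclideanCLM (𝕜 := ℝ) A⁻¹ ((WithLp.equiv 2 (GFDMIdx n → ℝ)).symm x)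
        = (WithLp.equiv 2 (GFDMIdx n → ℝ)).symm (Matrix.toLin' A⁻¹ x) from fun x => rfl)]
    exact (Matrix.toEuclideanCLM (𝕜 := ℝ) A⁻¹).le_opNorm _
  have hrbound : ‖(WithLp.equiv 2 (GFDMIdx n → ℝ)).symm r‖
      ≤ M * ρ ^ (2 * n + 1) * ∑ k, ω k ^ 2 * euclNorm (V k) := by
    have hre : (WithLp.equiv 2 (GFDMIdx n → ℝ)).symm r
        = ∑ k, (ω k ^ 2 * R k) • (WithLp.equiv 2 (GFDMIdx n → ℝ)).symm (V k) := by
      rw [hr]; simp [WithLp.toLp_sum]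
    rw [hre]
    refine le_trans (norm_sum_le _ _) ?_
    rw [Finset.mul_sum]
    refine Finset.sum_le_sum fun k _ => ?_
    rw [norm_smul]
    have h1 : ‖ω k ^ 2 * R k‖ = ω k ^ 2 * |R k| := by
      rw [Real.norm_eq_abs, abs_mul, abs_of_nonneg (sq_nonneg (ω k))]
    rw [h1, ← euclNorm_eq]
    have h2 : |R k| ≤ M * ρ ^ (2 * n + 1) := by
      refine le_trans (hRbd k) ?_
      exact mul_le_mul_of_nonneg_left
        (pow_le_pow_left₀ (norm_nonneg _) (hρ k) _) hM
    have h3 : 0 ≤ euclNorm (V k) := Real.sqrt_nonneg _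
    calc ω k ^ 2 * |R k| * euclNorm (V k)
        ≤ ω k ^ 2 * (M * ρ ^ (2 * n + 1)) * euclNorm (V k) := by
          refine mul_le_mul_of_nonneg_right (mul_le_mul_of_nonneg_left h2 (sq_nonneg _)) h3
      _ = M * ρ ^ (2 * n + 1) * (ω k ^ 2 * euclNorm (V k)) := by ring
  calc euclNorm (D - Dstar)
      ≤ ‖Matrix.toEuclideanCLM (𝕜 := ℝ) A⁻¹‖ * ‖(WithLp.equiv 2 (GFDMIdx n → ℝ)).symm r‖ :=
        hnorm
    _ ≤ ‖Matrix.toEuclideanCLM (𝕜 := ℝ) A⁻¹‖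
          * (M * ρ ^ (2 * n + 1) * ∑ k, ω k ^ 2 * euclNorm (V k)) :=
        mul_le_mul_of_nonneg_left hrbound (norm_nonneg _)
    _ = ‖Matrix.toEuclideanCLM (𝕜 := ℝ) A⁻¹‖ * M * ρ ^ (2 * n + 1)
          * ∑ k, ω k ^ 2 * euclNorm (V k) := by ring
end
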